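/- Let n ≥ 13 and let H be a 4-uniform hypergraph on n vertices such that every pair of distinct vertices is contained in exactly one edge (i.e., H is a Steiner system S(2,4,n)). Then H is a Šoltés hypergraph; moreover H has diameter 1 and W(H \ v) = C(n-1,2) + (n-1) = C(n,2) = W(H) for every vertex v. -/

import Mathlib

variable {α : Type*} {β : Type*}

/-- A hypergraph: a finite vertex set together with a set of edges,
each an at-least-2-element subset of the vertex set. -/
structure FinHypergraph (α : Type*) where
  verts : Finset α
  edges : Finset (Finset α)
  edge_sub : ∀ e ∈ edges, e ⊆ verts
  edge_card : ∀ e ∈ edges, 2 ≤ e.card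

namespace FinHypergraph

/-- The 2-section graph of a hypergraph: two distinct vertices are adjacent
iff some edge contains both. -/
def twoSection (H : FinHypergraph α) : SimpleGraph α where
  Adj u v := u ≠ v ∧ ∃ e ∈ H.edges, u ∈ e ∧ v ∈ e
  symm := ⟨by
    rintro u v ⟨huv, e, he, hu, hv⟩
    exact ⟨huv.symm, e, he, hv, hu⟩⟩
  loopless := ⟨by
    rintro u ⟨h, -⟩
    exact h rfl⟩

/-- Distance between two vertices: graph distance in the 2-section. -/
noncomputable def dist (H : FinHypergraph α) (u v : α) : ℕ :=
  H.twoSection.dist u v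

/-- A hypergraph is connected if every two of its vertices are joined by a path. -/
def Connected (H : FinHypergraph α) : Prop :=
  ∀ u ∈ H.verts, ∀ v ∈ H.verts, H.twoSection.Reachable u v

/-- The Wiener index (total distance): the sum of distances over all
unordered pairs of distinct vertices. -/
noncomputable def wiener [DecidableEq α] (H : FinHypergraph α) : ℕ :=
  ∑ p ∈ H.verts.sym2.filter (fun p => ¬ p.IsDiag),
    Sym2.lift ⟨fun u v => H.dist u v, fun _ _ => SimpleGraph.dist_comm⟩ p

/-- Vertex deletion: remove the vertex and all edges containing it. -/
def delete [DecidableEq α] (H : FinHypergraph α) (v : α) : FinHypergraph α where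
  verts := H.verts.erase v
  edges := H.edges.filter fun e => v ∉ e
  edge_sub := by
    intro e he x hx
    rw [Finset.mem_filter] at he
    exact Finset.mem_erase.mpr ⟨fun h => he.2 (h ▸ hx), H.edge_sub e he.1 hx⟩
  edge_card := fun e he => H.edge_card e (Finset.mem_filter.mp he).1

/-- A Šoltés hypergraph: a connected hypergraph on at least 2 vertices such that
deleting any vertex leaves a connected hypergraph with the same Wiener index. -/
def IsSoltes [DecidableEq α] (H : FinHypergraph α) : Prop :=
  2 ≤ H.verts.card ∧ H.Connected ∧
    ∀ v ∈ H.verts, (H.delete v).Connected ∧ (H.delete v).wiener = H.wiener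

/-- The diameter: the maximum distance over unordered pairs of distinct vertices. -/
noncomputable def diam [DecidableEq α] (H : FinHypergraph α) : ℕ :=
  H.verts.offDiag.sup fun p => H.dist p.1 p.2

/-- The degree of a vertex: the number of edges containing it. -/
def degree [DecidableEq α] (H : FinHypergraph α) (v : α) : ℕ :=
  (H.edges.filter fun e => v ∈ e).card

/-- Hypergraph isomorphism: a bijection between the vertex sets mapping
edges onto edges. -/
def IsIsoTo [DecidableEq β] (H : FinHypergraph α) (H' : FinHypergraph β) : Prop :=
  ∃ f : α → β, Set.InjOn f ↑H.verts ∧ H'.verts = H.verts.image f ∧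
    H'.edges = H.edges.image fun e => e.image f

end FinHypergraph

/-!
In a linear space (every pair of vertices in exactly one edge) all distances are `1`, so
`W(H) = C(n, 2)`. In `H \ v`, two vertices `u, w` stay adjacent unless the edge through them
contains `v`; then they are at distance `2`, via any vertex outside that edge, since the edges
joining it to `u` and `w` cannot contain `v`. The edges through `v` partition `V \ {v}` into
`r = deg v` blocks of size `k - 1`, giving `r * C(k - 1, 2)` pairs at distance `2` and
`r * (k - 1) = n - 1`. For `k = 4` both counts are `n - 1`, so
`W(H \ v) = C(n - 1, 2) + (n - 1) = C(n, 2)`.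
-/

open Finset

lemma Finset.card_sym2_filter_not_isDiag [DecidableEq α] (s : Finset α) :
    #{z ∈ s.sym2 | ¬z.IsDiag} = (#s).choose 2 := by
  rw [sym2_eq_image, Sym2.filter_image_mk_not_isDiag, Sym2.card_image_offDiag]

lemma Finset.disjoint_sym2 {s t : Finset α} (h : Disjoint s t) : Disjoint s.sym2 t.sym2 := by
  refine Finset.disjoint_left.mpr fun z hs ht => ?_
  induction z using Sym2.ind with
  | _ a b => exact Finset.disjoint_left.mp h (mk_mem_sym2_iff.mp hs).1 (mk_mem_sym2_iff.mp ht).1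

namespace FinHypergraph

section

variable [DecidableEq α] (H : FinHypergraph α)

lemma wiener_eq_choose_add_card_filter (p : Sym2 α → Prop) [DecidablePred p]
    (hdist : ∀ u ∈ H.verts, ∀ w ∈ H.verts, u ≠ w → H.dist u w = if p s(u, w) then 2 else 1) :
    H.wiener = (#H.verts).choose 2 + #{z ∈ {z ∈ H.verts.sym2 | ¬z.IsDiag} | p z} := by
  have hterm : ∀ z ∈ {z ∈ H.verts.sym2 | ¬z.IsDiag},
      Sym2.lift ⟨fun u w => H.dist u w, fun _ _ => SimpleGraph.dist_comm⟩ z =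
        1 + if p z then 1 else 0 := by
    intro z hz
    induction z using Sym2.ind with
    | _ u w =>
      obtain ⟨huw, hnd⟩ := mem_filter.mp hz
      rw [mk_mem_sym2_iff] at huw
      change H.dist u w = _
      rw [hdist u huw.1 w huw.2 (by simpa using hnd)]
      split_ifs <;> rfl
  rw [wiener, sum_congr rfl hterm, sum_add_distrib, card_filter, sum_const,
    card_sym2_filter_not_isDiag, smul_eq_mul, mul_one]

lemma wiener_eq_choose_of_dist_eq_one
    (hdist : ∀ u ∈ H.verts, ∀ w ∈ H.verts, u ≠ w → H.dist u w = 1) :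
    H.wiener = (#H.verts).choose 2 := by
  simpa using H.wiener_eq_choose_add_card_filter (fun _ => False) (by simpa using hdist)

lemma filter_mem_edge_sym2_eq_biUnion (v : α) :
    {z ∈ {z ∈ (H.verts.erase v).sym2 | ¬z.IsDiag} | ∃ e ∈ H.edges, v ∈ e ∧ z ∈ e.sym2} =
      {e ∈ H.edges | v ∈ e}.biUnion fun e => {z ∈ (e.erase v).sym2 | ¬z.IsDiag} := by
  ext z
  simp only [mem_filter, mem_biUnion, mem_sym2_iff, mem_erase]
  constructor
  · rintro ⟨⟨hzV, hz⟩, e, he, hve, hze⟩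
    exact ⟨e, ⟨he, hve⟩, fun a ha => ⟨(hzV a ha).1, hze a ha⟩, hz⟩
  · rintro ⟨e, ⟨he, hve⟩, hze, hz⟩
    exact ⟨⟨fun a ha => ⟨(hze a ha).1, H.edge_sub e he (hze a ha).2⟩, hz⟩, e, he, hve,
      fun a ha => (hze a ha).2⟩

end

/-- A `k`-uniform linear space on `n` vertices is a Steiner system `S(2, k, n)`. -/
structure IsLinearSpace (H : FinHypergraph α) : Prop where
  exists_edge : ∀ u ∈ H.verts, ∀ w ∈ H.verts, u ≠ w → ∃ e ∈ H.edges, u ∈ e ∧ w ∈ e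
  eq_of_mem : ∀ e ∈ H.edges, ∀ e' ∈ H.edges, ∀ u w : α, u ≠ w →
    u ∈ e → w ∈ e → u ∈ e' → w ∈ e' → e = e'

lemma isLinearSpace_of_card_filter_eq_one [DecidableEq α] {H : FinHypergraph α}
    (h : ∀ u ∈ H.verts, ∀ w ∈ H.verts, u ≠ w → #{e ∈ H.edges | u ∈ e ∧ w ∈ e} = 1) :
    H.IsLinearSpace where
  exists_edge u hu w hw huw := by
    obtain ⟨e, he⟩ := card_pos.mp (h u hu w hw huw).ge
    exact ⟨e, (mem_filter.mp he).1, (mem_filter.mp he).2⟩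
  eq_of_mem e he e' he' u w huw hue hwe hue' hwe' :=
    card_le_one.mp (h u (H.edge_sub e he hue) w (H.edge_sub e he hwe) huw).le e
      (mem_filter.mpr ⟨he, hue, hwe⟩) e' (mem_filter.mpr ⟨he', hue', hwe'⟩)

namespace IsLinearSpace

variable {H : FinHypergraph α} (hH : H.IsLinearSpace) {u w : α}
include hH

lemma twoSection_adj (hu : u ∈ H.verts) (hw : w ∈ H.verts) (huw : u ≠ w) :
    H.twoSection.Adj u w :=
  ⟨huw, hH.exists_edge u hu w hw huw⟩

lemma dist_eq_one (hu : u ∈ H.verts) (hw : w ∈ H.verts) (huw : u ≠ w) : H.dist u w = 1 :=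
  SimpleGraph.dist_eq_one_iff_adj.mpr (hH.twoSection_adj hu hw huw)

lemma connected : H.Connected := by
  intro u hu w hw
  obtain rfl | huw := eq_or_ne u w
  · rfl
  · exact (hH.twoSection_adj hu hw huw).reachable

lemma wiener_eq [DecidableEq α] : H.wiener = (#H.verts).choose 2 :=
  H.wiener_eq_choose_of_dist_eq_one fun _ hu _ hw huw => hH.dist_eq_one hu hw huw

lemma diam_eq_one [DecidableEq α] (h : 1 < #H.verts) : H.diam = 1 := by
  refine le_antisymm (Finset.sup_le fun p hp => ?_) ?_
  · obtain ⟨hp₁, hp₂, hp⟩ := mem_offDiag.mp hp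
    exact (hH.dist_eq_one hp₁ hp₂ hp).le
  · obtain ⟨u, hu, w, hw, huw⟩ := one_lt_card.mp h
    calc 1 = H.dist u w := (hH.dist_eq_one hu hw huw).symm
      _ ≤ H.diam := le_sup (f := fun p => H.dist p.1 p.2)
        (mem_offDiag.mpr ⟨hu, hw, huw⟩ : (u, w) ∈ H.verts.offDiag)

section

variable [DecidableEq α] {v : α}

lemma twoSection_delete_adj_iff (hu : u ∈ H.verts) (hw : w ∈ H.verts) (huw : u ≠ w) :
    (H.delete v).twoSection.Adj u w ↔ ¬∃ e ∈ H.edges, v ∈ e ∧ u ∈ e ∧ w ∈ e := by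
  constructor
  · rintro ⟨-, e', he', hue', hwe'⟩ ⟨e, he, hve, hue, hwe⟩
    obtain ⟨he', hve'⟩ := mem_filter.mp he'
    exact hve' (hH.eq_of_mem e he e' he' u w huw hue hwe hue' hwe' ▸ hve)
  · intro hno
    obtain ⟨e, he, hue, hwe⟩ := hH.exists_edge u hu w hw huw
    exact ⟨huw, e, mem_filter.mpr ⟨he, fun hve => hno ⟨e, he, hve, hue, hwe⟩⟩, hue, hwe⟩

lemma dist_delete_of_mem_edge (hproper : ∀ e ∈ H.edges, #e < #H.verts) {e : Finset α}
    (he : e ∈ H.edges) (hve : v ∈ e) (hue : u ∈ e) (hwe : w ∈ e)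
    (huv : u ≠ v) (hwv : w ≠ v) (huw : u ≠ w) :
    (H.delete v).dist u w = 2 := by
  obtain ⟨x, hx, hxe⟩ := exists_mem_notMem_of_card_lt_card (hproper e he)
  have hadj : ∀ y ∈ e, y ≠ v → (H.delete v).twoSection.Adj y x := by
    intro y hye hyv
    refine (hH.twoSection_delete_adj_iff (H.edge_sub e he hye) hx ?_).mpr ?_
    · rintro rfl
      exact hxe hye
    · rintro ⟨e', he', hve', hye', hxe'⟩
      exact hxe (hH.eq_of_mem e' he' e he y v hyv hye' hve' hye hve ▸ hxe')
  have hux := hadj u hue huv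
  have hxw := (hadj w hwe hwv).symm
  have hle : (H.delete v).dist u w ≤ 2 :=
    (SimpleGraph.dist_le (hux.toWalk.append hxw.toWalk)).trans (by simp)
  have hpos : 0 < (H.delete v).dist u w := (hux.reachable.trans hxw.reachable).pos_dist_of_ne huw
  have hne : (H.delete v).dist u w ≠ 1 := fun h =>
    (hH.twoSection_delete_adj_iff (H.edge_sub e he hue) (H.edge_sub e he hwe) huw).mp
      (SimpleGraph.dist_eq_one_iff_adj.mp h) ⟨e, he, hve, hue, hwe⟩
  omega

lemma dist_delete_eq_ite (hproper : ∀ e ∈ H.edges, #e < #H.verts)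
    (hu : u ∈ H.verts.erase v) (hw : w ∈ H.verts.erase v) (huw : u ≠ w) :
    (H.delete v).dist u w = if ∃ e ∈ H.edges, v ∈ e ∧ s(u, w) ∈ e.sym2 then 2 else 1 := by
  obtain ⟨huv, hu⟩ := mem_erase.mp hu
  obtain ⟨hwv, hw⟩ := mem_erase.mp hw
  simp only [mk_mem_sym2_iff]
  split_ifs with h
  · obtain ⟨e, he, hve, hue, hwe⟩ := h
    exact hH.dist_delete_of_mem_edge hproper he hve hue hwe huv hwv huw
  · exact SimpleGraph.dist_eq_one_iff_adj.mpr ((hH.twoSection_delete_adj_iff hu hw huw).mpr h)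

lemma connected_delete (hproper : ∀ e ∈ H.edges, #e < #H.verts) : (H.delete v).Connected := by
  intro u hu w hw
  obtain rfl | huw := eq_or_ne u w
  · rfl
  · refine SimpleGraph.Reachable.of_dist_ne_zero ?_
    change (H.delete v).dist u w ≠ 0
    rw [hH.dist_delete_eq_ite hproper hu hw huw]
    split_ifs <;> simp

lemma biUnion_erase_edges_mem (hv : v ∈ H.verts) :
    {e ∈ H.edges | v ∈ e}.biUnion (·.erase v) = H.verts.erase v := by
  ext u
  simp only [mem_biUnion, mem_filter, mem_erase]
  constructor
  · rintro ⟨e, ⟨he, -⟩, huv, hue⟩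
    exact ⟨huv, H.edge_sub e he hue⟩
  · rintro ⟨huv, hu⟩
    obtain ⟨e, he, hue, hve⟩ := hH.exists_edge u hu v hv huv
    exact ⟨e, ⟨he, hve⟩, huv, hue⟩

lemma pairwiseDisjoint_erase_edges_mem :
    (({e ∈ H.edges | v ∈ e} : Finset (Finset α)) : Set (Finset α)).PairwiseDisjoint
      (·.erase v) := by
  intro e he e' he' hne
  obtain ⟨he, hve⟩ := mem_filter.mp he
  obtain ⟨he', hve'⟩ := mem_filter.mp he'
  refine disjoint_left.mpr fun u hu hu' => hne ?_
  exact hH.eq_of_mem e he e' he' u v (ne_of_mem_erase hu) (mem_of_mem_erase hu) hve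
    (mem_of_mem_erase hu') hve'

variable {k : ℕ} (hk : ∀ e ∈ H.edges, #e = k)
include hk

lemma degree_mul_eq_card_sub_one (hv : v ∈ H.verts) :
    H.degree v * (k - 1) = #H.verts - 1 := by
  rw [← card_erase_of_mem hv, ← hH.biUnion_erase_edges_mem hv,
    card_biUnion hH.pairwiseDisjoint_erase_edges_mem,
    sum_congr rfl fun e he => by
      rw [card_erase_of_mem (mem_filter.mp he).2, hk e (mem_filter.mp he).1],
    sum_const, smul_eq_mul, degree]

lemma card_filter_mem_edge_sym2 :
    #{z ∈ {z ∈ (H.verts.erase v).sym2 | ¬z.IsDiag} | ∃ e ∈ H.edges, v ∈ e ∧ z ∈ e.sym2} =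
      H.degree v * (k - 1).choose 2 := by
  rw [H.filter_mem_edge_sym2_eq_biUnion v,
    card_biUnion fun e he e' he' hne => disjoint_filter_filter
      (disjoint_sym2 (hH.pairwiseDisjoint_erase_edges_mem he he' hne)),
    sum_congr rfl fun e he => by
      rw [card_sym2_filter_not_isDiag, card_erase_of_mem (mem_filter.mp he).2,
        hk e (mem_filter.mp he).1],
    sum_const, smul_eq_mul, degree]

lemma wiener_delete (hlt : k < #H.verts) (hv : v ∈ H.verts) :
    (H.delete v).wiener = (#H.verts - 1).choose 2 + H.degree v * (k - 1).choose 2 := by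
  have hproper : ∀ e ∈ H.edges, #e < #H.verts := fun e he => hk e he ▸ hlt
  rw [wiener_eq_choose_add_card_filter _ (fun z => ∃ e ∈ H.edges, v ∈ e ∧ z ∈ e.sym2)
      fun u hu w hw huw => hH.dist_delete_eq_ite hproper hu hw huw,
    ← hH.card_filter_mem_edge_sym2 hk, ← card_erase_of_mem hv]
  rfl

end

end IsLinearSpace

end FinHypergraph

theorem stmt8 {α : Type*} [DecidableEq α] (n : ℕ) (hn : 13 ≤ n)
    (H : FinHypergraph α) (hcard : H.verts.card = n)
    (h4 : ∀ e ∈ H.edges, e.card = 4)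
    (hSteiner : ∀ u ∈ H.verts, ∀ v ∈ H.verts, u ≠ v →
      (H.edges.filter fun e => u ∈ e ∧ v ∈ e).card = 1) :
    H.IsSoltes ∧ H.diam = 1 ∧ H.wiener = n.choose 2 ∧
      ∀ v ∈ H.verts, (H.delete v).wiener = (n - 1).choose 2 + (n - 1) := by
  have hH := FinHypergraph.isLinearSpace_of_card_filter_eq_one hSteiner
  have hproper : ∀ e ∈ H.edges, #e < #H.verts := fun e he => by
    rw [h4 e he, hcard]
    omega
  have hdel : ∀ v ∈ H.verts, (H.delete v).wiener = (n - 1).choose 2 + (n - 1) := by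
    intro v hv
    have hdeg : H.degree v * 3 = n - 1 := hcard ▸ hH.degree_mul_eq_card_sub_one h4 hv
    rw [hH.wiener_delete h4 (by omega) hv, hcard, ← hdeg]
    rfl
  have hchoose : (n - 1).choose 2 + (n - 1) = n.choose 2 := by
    obtain ⟨m, rfl⟩ : ∃ m, n = m + 1 := ⟨n - 1, by omega⟩
    rw [Nat.add_sub_cancel, Nat.choose_succ_succ', Nat.choose_one_right, add_comm]
  refine ⟨⟨by omega, hH.connected, fun v hv => ⟨hH.connected_delete hproper, ?_⟩⟩,
    hH.diam_eq_one (by omega), by rw [hH.wiener_eq, hcard], hdel⟩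
  rw [hdel v hv, hH.wiener_eq, hcard, hchoose]
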